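/- Let p be an odd prime, k ≥ 1 and n ≥ 1, and let B be a p^k-form of rank n with mod-p reduction B_red. Then the cardinality of O(B) equals p^{(k−1)·n(n−1)/2} times the cardinality of O(B_red). -/

import Mathlib

open Matrix

/-!
Reduction `ZMod (p ^ (k + 1)) → ZMod (p ^ k)` is surjective, its kernel `I` has `p` elements and
`I * I = 0`, and `2` is invertible. Over any such square-zero thickening `f : R → S`, the lifts of
an isometry `A₀` of `B.map f` are `A + X` with `A` one fixed lift and `X` a matrix with entries in
`I`. Since `Xᵀ B X = 0`, the isometry condition becomes linear: `W + Wᵀ = B - Aᵀ B A` for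
`W = Aᵀ B X`, and `X ↦ W` is a bijection since `Aᵀ B` is invertible. The solutions form a coset
of the skew matrices with entries in `I`, so every fibre of reduction has `|I| ^ (n choose 2)`
elements, and induction on `k` gives the formula.
-/

section SquareZeroKernel

variable {R S : Type*} [CommRing R] [CommRing S] {f : R →+* S} {ι : Type*}

theorem isUnit_of_isUnit_map (hf : Function.Surjective f)
    (hker : ∀ x y, f x = 0 → f y = 0 → x * y = 0) {x : R} (hx : IsUnit (f x)) : IsUnit x := by
  obtain ⟨y, hy⟩ := hf ↑hx.unit⁻¹
  have hxy : f (x * y - 1) = 0 := by simp [hy]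
  have hnil : IsNilpotent (x * y - 1) := ⟨2, by rw [sq]; exact hker _ _ hxy hxy⟩
  have h := hnil.isUnit_one_add
  rw [add_sub_cancel] at h
  exact isUnit_of_mul_isUnit_left h

theorem Matrix.mul_eq_zero_of_map_eq_zero [Fintype ι]
    (hker : ∀ x y, f x = 0 → f y = 0 → x * y = 0) {X Y : Matrix ι ι R} (hX : X.map f = 0)
    (hY : Y.map f = 0) : X * Y = 0 := by
  ext i j
  exact Finset.sum_eq_zero fun l _ =>
    hker _ _ (congrFun (congrFun hX i) l) (congrFun (congrFun hY l) j)

theorem Matrix.add_transpose_mul_mul_add_of_map_eq_zero [Fintype ι]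
    (hker : ∀ x y, f x = 0 → f y = 0 → x * y = 0) {B : Matrix ι ι R} (hB : B.IsSymm)
    (A : Matrix ι ι R) {X : Matrix ι ι R} (hX : X.map f = 0) :
    (A + X)ᵀ * B * (A + X) = Aᵀ * B * A + ((Aᵀ * B * X)ᵀ + Aᵀ * B * X) := by
  have hXBX : Xᵀ * B * X = 0 := by
    rw [mul_assoc]
    refine Matrix.mul_eq_zero_of_map_eq_zero hker ?_ ?_
    · rw [transpose_map, hX, transpose_zero]
    · rw [Matrix.map_mul, hX, Matrix.mul_zero]
  have hsymm : (Aᵀ * B * X)ᵀ = Xᵀ * B * A := by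
    rw [transpose_mul, transpose_mul, transpose_transpose, hB.eq, mul_assoc]
  rw [hsymm, transpose_add, add_mul, add_mul, mul_add, mul_add, hXBX]
  abel

theorem card_skew_matrices_in_ker [Fintype ι] [LinearOrder ι] [Invertible (2 : R)] :
    Nat.card {X : Matrix ι ι R // X.map f = 0 ∧ Xᵀ = -X} =
      Nat.card (RingHom.ker f) ^ (Fintype.card ι).choose 2 := by
  have hdiag : ∀ X : Matrix ι ι R, Xᵀ = -X → ∀ i, X i i = 0 := fun X hX i => by
    have h := congrFun (congrFun hX i) i
    simp only [transpose_apply, Matrix.neg_apply] at h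
    have h2 : (2 : R) * X i i = 0 := by linear_combination h
    rw [← one_mul (X i i), ← invOf_mul_self (2 : R), mul_assoc, h2, mul_zero]
  let e : {X : Matrix ι ι R // X.map f = 0 ∧ Xᵀ = -X} ≃
      ({q : ι × ι // q.1 < q.2} → RingHom.ker f) :=
    { toFun := fun X q => ⟨X.1 q.1.1 q.1.2, congrFun (congrFun X.2.1 q.1.1) q.1.2⟩
      invFun := fun F => ⟨Matrix.of fun i j =>
          if h : i < j then F ⟨(i, j), h⟩ else if h' : j < i then -F ⟨(j, i), h'⟩ else 0, by
        refine ⟨?_, ?_⟩ <;> ext i j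
        · simp only [map_apply, of_apply, Matrix.zero_apply]
          split_ifs <;> simp [RingHom.mem_ker.mp (F _).2]
        · simp only [transpose_apply, Matrix.neg_apply, of_apply]
          rcases lt_trichotomy i j with h | rfl | h
          · simp [h, not_lt_of_gt h]
          · simp
          · simp [h, not_lt_of_gt h]⟩
      left_inv := fun X => by
        ext i j
        simp only [of_apply]
        rcases lt_trichotomy i j with h | rfl | h
        · simp [h]
        · simp [hdiag X.1 X.2.2 i]
        · have hji := congrFun (congrFun X.2.2 j) i
          simp only [transpose_apply, Matrix.neg_apply] at hji
          simp [h, not_lt_of_gt h, hji]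
      right_inv := fun F => by
        funext ⟨⟨i, j⟩, h⟩
        simp [h] }
  rw [Nat.card_congr e, Nat.card_fun, Nat.card_eq_fintype_card (α := {q : ι × ι // q.1 < q.2}),
    Fintype.card_subtype, Fintype.card_product_filter_lt]

theorem card_ker_matrices_transpose_add_eq [Invertible (2 : R)] {D : Matrix ι ι R}
    (hD : D.map f = 0) (hDsymm : Dᵀ = D) :
    Nat.card {W : Matrix ι ι R // W.map f = 0 ∧ Wᵀ + W = D} =
      Nat.card {X : Matrix ι ι R // X.map f = 0 ∧ Xᵀ = -X} := by
  set H := (⅟2 : R) • D with hH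
  have hHker : H.map f = 0 := by
    ext i j
    simp [hH, show f (D i j) = 0 from congrFun (congrFun hD i) j]
  have hHsymm : Hᵀ = H := by rw [transpose_smul, hDsymm]
  have hHH : H + H = D := by rw [← add_smul, invOf_two_add_invOf_two, one_smul]
  refine Nat.card_congr (Equiv.subtypeEquiv (Equiv.subRight H) fun W => and_congr ?_ ?_)
  · rw [Equiv.subRight_apply, Matrix.map_sub _ (map_sub f), hHker, sub_zero]
  · rw [Equiv.subRight_apply, transpose_sub, hHsymm, ← hHH, neg_sub, sub_eq_sub_iff_add_eq_add]

variable [Fintype ι] [DecidableEq ι]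

theorem card_isometries_in_fiber (hf : Function.Surjective f)
    (hker : ∀ x y, f x = 0 → f y = 0 → x * y = 0) [Invertible (2 : R)] {B : Matrix ι ι R}
    (hB : B.IsSymm) (hBdet : IsUnit B.det) {A₀ : Matrix ι ι S}
    (hA₀ : A₀ᵀ * B.map f * A₀ = B.map f) :
    Nat.card {A : Matrix ι ι R // Aᵀ * B * A = B ∧ A.map f = A₀} =
      Nat.card {X : Matrix ι ι R // X.map f = 0 ∧ Xᵀ = -X} := by
  set A₁ := A₀.map (Function.surjInv hf)
  have hA₁ : A₁.map f = A₀ := by ext; simp [A₁, Function.surjInv_eq hf]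
  set M := A₁ᵀ * B
  have hMmap : M.map f = A₀ᵀ * B.map f := by rw [Matrix.map_mul, transpose_map, hA₁]
  have hM : IsUnit M := by
    rw [isUnit_iff_isUnit_det]
    refine isUnit_of_isUnit_map hf hker ?_
    rw [RingHom.map_det, RingHom.mapMatrix_apply, hMmap]
    have h := hBdet.map f
    rw [RingHom.map_det, RingHom.mapMatrix_apply, ← hA₀, det_mul] at h
    exact isUnit_of_mul_isUnit_left h
  have hM_ker : ∀ X : Matrix ι ι R, (M * X).map f = 0 ↔ X.map f = 0 := fun X => by
    refine ⟨fun h => ?_, fun h => by rw [Matrix.map_mul, h, Matrix.mul_zero]⟩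
    rw [← hM.unit.inv_mul_cancel_left X, Matrix.map_mul, hM.unit_spec, h, Matrix.mul_zero]
  set D := B - A₁ᵀ * B * A₁
  have hD : D.map f = 0 := by
    rw [Matrix.map_sub _ (map_sub f), Matrix.map_mul, hMmap, hA₁, hA₀, sub_self]
  have hDsymm : Dᵀ = D := by
    rw [transpose_sub, transpose_mul, transpose_mul, transpose_transpose, hB.eq, ← mul_assoc]
  refine (Nat.card_congr (Equiv.subtypeEquiv ((Equiv.subRight A₁).trans hM.unit.mulLeft)
    fun A => ?_)).trans (card_ker_matrices_transpose_add_eq hD hDsymm)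
  obtain ⟨X, rfl⟩ : ∃ X, A = A₁ + X := ⟨A - A₁, by abel⟩
  simp only [Equiv.trans_apply, Equiv.subRight_apply, Units.mulLeft_apply, hM.unit_spec,
    add_sub_cancel_left]
  rw [Matrix.map_add _ (map_add f), hA₁, add_eq_left, hM_ker, and_comm]
  exact and_congr_right fun hX => by
    rw [add_transpose_mul_mul_add_of_map_eq_zero hker hB A₁ hX, eq_sub_iff_add_eq']

theorem card_isometries_eq_mul [Finite R] (hf : Function.Surjective f)
    (hker : ∀ x y, f x = 0 → f y = 0 → x * y = 0) [Invertible (2 : R)] {B : Matrix ι ι R}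
    (hB : B.IsSymm) (hBdet : IsUnit B.det) :
    Nat.card {A : Matrix ι ι R // Aᵀ * B * A = B} =
      Nat.card {X : Matrix ι ι R // X.map f = 0 ∧ Xᵀ = -X} *
        Nat.card {A : Matrix ι ι S // Aᵀ * B.map f * A = B.map f} := by
  have : Finite S := Finite.of_surjective f hf
  have := Fintype.ofFinite {A : Matrix ι ι S // Aᵀ * B.map f * A = B.map f}
  let π : {A : Matrix ι ι R // Aᵀ * B * A = B} →
      {A : Matrix ι ι S // Aᵀ * B.map f * A = B.map f} :=
    fun A => ⟨A.1.map f, by rw [← transpose_map, ← Matrix.map_mul, ← Matrix.map_mul, A.2]⟩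
  have hfiber : ∀ A₀, Nat.card {A // π A = A₀} =
      Nat.card {X : Matrix ι ι R // X.map f = 0 ∧ Xᵀ = -X} := fun A₀ => by
    rw [← card_isometries_in_fiber hf hker hB hBdet A₀.2]
    exact Nat.card_congr ((Equiv.subtypeEquivRight fun A : {A // Aᵀ * B * A = B} =>
      Subtype.ext_iff).trans
        (Equiv.subtypeSubtypeEquivSubtypeInter _ fun A : Matrix ι ι R => A.map f = A₀.1))
  rw [← Nat.card_congr (Equiv.sigmaFiberEquiv π), Nat.card_sigma,
    Finset.sum_congr rfl fun A₀ _ => hfiber A₀, Finset.sum_const, Finset.card_univ, smul_eq_mul,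
    mul_comm, ← Nat.card_eq_fintype_card]

end SquareZeroKernel

theorem ZMod.castHom_mul_eq_zero {l m : ℕ} (hml : m ∣ l) (hlm : l ∣ m * m) {x y : ZMod l}
    (hx : castHom hml (ZMod m) x = 0) (hy : castHom hml (ZMod m) y = 0) : x * y = 0 := by
  have hdvd : ∀ z : ZMod l, castHom hml (ZMod m) z = 0 → (m : ℤ) ∣ (z.cast : ℤ) := fun z hz => by
    rwa [← ZMod.intCast_zmod_eq_zero_iff_dvd, ZMod.intCast_cast, ← castHom_apply]
  rw [← ZMod.intCast_zmod_cast x, ← ZMod.intCast_zmod_cast y, ← Int.cast_mul,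
    ZMod.intCast_zmod_eq_zero_iff_dvd]
  exact (Int.natCast_dvd_natCast.mpr hlm).trans
    (by exact_mod_cast mul_dvd_mul (hdvd x hx) (hdvd y hy))

theorem ZMod.card_ker_castHom {l m : ℕ} [NeZero l] (hml : m ∣ l) :
    Nat.card (RingHom.ker (castHom hml (ZMod m))) = l / m := by
  have hm : 0 < m := Nat.pos_of_dvd_of_pos hml (NeZero.pos l)
  have h := (castHom hml (ZMod m)).toAddMonoidHom.ker.card_mul_index
  rw [AddSubgroup.index_ker, AddMonoidHom.range_eq_top.mpr (castHom_surjective hml),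
    AddSubgroup.card_top, Nat.card_zmod, Nat.card_zmod] at h
  exact (Nat.div_eq_of_eq_mul_left hm h.symm).symm

theorem card_isometries_zmod_eq_mul {l m n : ℕ} (hl : Odd l) (hml : m ∣ l) (hlm : l ∣ m * m)
    {B : Matrix (Fin n) (Fin n) (ZMod l)} (hB : B.IsSymm) (hBdet : IsUnit B.det) :
    Nat.card {A : Matrix (Fin n) (Fin n) (ZMod l) // Aᵀ * B * A = B} =
      (l / m) ^ (n * (n - 1) / 2) *
        Nat.card {A : Matrix (Fin n) (Fin n) (ZMod m) //
          Aᵀ * B.map (ZMod.castHom hml (ZMod m)) * A = B.map (ZMod.castHom hml (ZMod m))} := by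
  have : NeZero l := ⟨hl.pos.ne'⟩
  have h2 : IsUnit ((2 : ℕ) : ZMod l) :=
    (ZMod.isUnit_iff_coprime 2 l).mpr (Nat.coprime_two_left.mpr hl)
  have : Invertible (2 : ZMod l) := (by exact_mod_cast h2 : IsUnit (2 : ZMod l)).invertible
  rw [card_isometries_eq_mul (ZMod.castHom_surjective hml)
      (fun _ _ => ZMod.castHom_mul_eq_zero hml hlm) hB hBdet,
    card_skew_matrices_in_ker, ZMod.card_ker_castHom, Fintype.card_fin, Nat.choose_two_right]

theorem stmt8 (p : ℕ) (hp : p.Prime) (hp2 : p ≠ 2) (k : ℕ) (hk : 1 ≤ k) (n : ℕ)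
    (B : Matrix (Fin n) (Fin n) (ZMod (p ^ k))) (hsymm : B.IsSymm) (hdet : IsUnit B.det) :
    Nat.card {A : Matrix (Fin n) (Fin n) (ZMod (p ^ k)) // Aᵀ * B * A = B} =
      p ^ ((k - 1) * (n * (n - 1) / 2)) *
        Nat.card {A : Matrix (Fin n) (Fin n) (ZMod p) //
          Aᵀ * (B.map (ZMod.castHom (dvd_pow_self p (by omega : k ≠ 0)) (ZMod p))) * A =
            B.map (ZMod.castHom (dvd_pow_self p (by omega : k ≠ 0)) (ZMod p))} := by
  have hodd : ∀ j, Odd (p ^ j) := fun j => (hp.odd_of_ne_two hp2).pow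
  induction k, hk using Nat.le_induction with
  | base =>
    have hsq : p ^ 1 ∣ p * p := by rw [pow_one]; exact dvd_mul_right p p
    rw [card_isometries_zmod_eq_mul (hodd 1) (dvd_pow_self p one_ne_zero) hsq hsymm hdet,
      Nat.sub_self, zero_mul, pow_zero]
    congr 1
    simp [Nat.div_self hp.pos]
  | succ k hk ih =>
    have hstep : p ^ k ∣ p ^ (k + 1) := pow_dvd_pow p k.le_succ
    have hsq : p ^ (k + 1) ∣ p ^ k * p ^ k := by rw [← pow_add]; exact pow_dvd_pow p (by omega)
    have hquot : p ^ (k + 1) / p ^ k = p := by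
      rw [pow_succ, Nat.mul_div_cancel_left _ (pow_pos hp.pos k)]
    have hdet' := hdet.map (ZMod.castHom hstep (ZMod (p ^ k)))
    rw [RingHom.map_det, RingHom.mapMatrix_apply] at hdet'
    rw [card_isometries_zmod_eq_mul (hodd _) hstep hsq hsymm hdet, ih _ (hsymm.map _) hdet',
      Matrix.map_map, ← RingHom.coe_comp, ZMod.castHom_comp, hquot, ← mul_assoc,
      ← pow_add]
    congr 2
    rw [Nat.add_sub_cancel, add_comm, ← Nat.succ_mul, Nat.succ_eq_add_one, Nat.sub_add_cancel hk]
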